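/- Let S = R[T_1,…,T_k] be a polynomial ring graded by a finitely generated abelian group D via deg(T_i) = d_i, and let T^n = T_1^{n_1}⋯T_k^{n_k} be a relevant monomial with support J = {i : n_i > 0}. Then the degree-zero part of the localization S_{T^n} equals the monoid algebra R[M_J], where M_J = {m ∈ ℤ^k : m_i ≥ 0 for i ∉ J and Σ m_i d_i = 0}. -/

import Mathlib

/-! The Laurent monomial `T^m` with `mᵢ ≥ 0` off the support of `n` is the element
`T^(m + j • n) / (T^n)^j` of `S_{T^n}`, for any `j` making `m + j • n ≥ 0`; this is multiplicative
in `m` and extends to a ring map `R[M_J] → S_{T^n}`. Multiplying an element of `R[M_J]` by a common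
denominator `(T^n)^j` gives a polynomial whose monomials `T^(m + j • n)` are pairwise distinct and
of degree `j • deg T^n`; since `T^n` is a nonzerodivisor this yields injectivity and one inclusion
of the range. Conversely each monomial `T^d` of a homogeneous `a` of degree `j • deg T^n` has
`d - j • n ∈ M_J`, so `a / (T^n)^j` lies in the image. -/

open MvPolynomial

/-- The monoid `M_J = {m ∈ ℤ^k : mᵢ ≥ 0 for i ∉ J and Σ mᵢ dᵢ = 0}`, where
`J = {i : nᵢ > 0}` is the support of the monomial `T^n`. -/
def MJ {k : ℕ} {D : Type*} [AddCommGroup D] (dw : Fin k → D) (n : Fin k → ℕ) :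
    AddSubmonoid (Fin k → ℤ) where
  carrier := {m | (∀ i, n i = 0 → 0 ≤ m i) ∧ ∑ i, m i • dw i = 0}
  zero_mem' := by simp
  add_mem' := by
    rintro a b ⟨ha1, ha2⟩ ⟨hb1, hb2⟩
    refine ⟨fun i hi => add_nonneg (ha1 i hi) (hb1 i hi), ?_⟩
    simp only [Pi.add_apply, add_zsmul]
    rw [Finset.sum_add_distrib, ha2, hb2, add_zero]

section LaurentMonomials

variable {k : ℕ}

section Exponents

variable (n : Fin k → ℕ)

/-- Exponents of the Laurent monomials `T^m` that lie in `S_{T^n}`. -/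
def awayExponents : AddSubmonoid (Fin k → ℤ) where
  carrier := {m | ∀ i, n i = 0 → 0 ≤ m i}
  zero_mem' _ _ := le_rfl
  add_mem' ha hb i hi := add_nonneg (ha i hi) (hb i hi)

lemma MJ_le_awayExponents {D : Type*} [AddCommGroup D] (dw : Fin k → D) :
    MJ dw n ≤ awayExponents n :=
  fun _ hm => hm.1

/-- The exponent of `T^m * (T^n)^j`, meaningful when `m + j • n ≥ 0` (otherwise `Int.toNat`
truncates). -/
noncomputable def shiftExponent (m : Fin k → ℤ) (j : ℕ) : Fin k →₀ ℕ :=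
  Finsupp.equivFunOnFinite.symm fun i => (m i + j * n i).toNat

def denomExponent (m : Fin k → ℤ) : ℕ := Finset.univ.sup fun i => (-m i).toNat

variable {n}

lemma shiftExponent_apply (m : Fin k → ℤ) (j : ℕ) (i : Fin k) :
    shiftExponent n m j i = (m i + j * n i).toNat := rfl

lemma shift_nonneg_of_denomExponent_le {m : Fin k → ℤ} (hm : m ∈ awayExponents n) {j : ℕ}
    (hj : denomExponent m ≤ j) (i : Fin k) : 0 ≤ m i + j * n i := by
  have hneg : (-m i).toNat ≤ j := (Finset.le_sup (Finset.mem_univ i)).trans hj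
  rcases Nat.eq_zero_or_pos (n i) with h | h
  · simpa [h] using hm i h
  · have : (j : ℤ) ≤ j * n i := le_mul_of_one_le_right (by positivity) (by exact_mod_cast h)
    omega

lemma shiftExponent_add {a b : Fin k → ℤ} {ja jb : ℕ} (ha : ∀ i, 0 ≤ a i + ja * n i)
    (hb : ∀ i, 0 ≤ b i + jb * n i) :
    shiftExponent n a ja + shiftExponent n b jb = shiftExponent n (a + b) (ja + jb) := by
  ext i
  have := ha i
  have := hb i
  simp only [Finsupp.add_apply, shiftExponent_apply, Pi.add_apply, Nat.cast_add, add_mul]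
  omega

lemma shiftExponent_injective {a b : Fin k → ℤ} {j : ℕ} (ha : ∀ i, 0 ≤ a i + j * n i)
    (hb : ∀ i, 0 ≤ b i + j * n i) (h : shiftExponent n a j = shiftExponent n b j) : a = b := by
  funext i
  have := ha i
  have := hb i
  have := DFunLike.congr_fun h i
  simp only [shiftExponent_apply] at this
  omega

lemma shiftExponent_sub (d : Fin k →₀ ℕ) (j : ℕ) :
    shiftExponent n (fun i => d i - j * n i) j = d := by
  ext i
  simp [shiftExponent_apply]

lemma weight_shiftExponent {D : Type*} [AddCommGroup D] (dw : Fin k → D) {m : Fin k → ℤ} {j : ℕ}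
    (hm : ∀ i, 0 ≤ m i + j * n i) :
    Finsupp.weight dw (shiftExponent n m j) = ∑ i, m i • dw i + j • ∑ i, n i • dw i := by
  rw [Finsupp.weight_apply, Finsupp.sum_fintype _ _ fun i => zero_smul ℕ (dw i), Finset.smul_sum,
    ← Finset.sum_add_distrib]
  refine Finset.sum_congr rfl fun i _ => ?_
  rw [← natCast_zsmul, shiftExponent_apply, Int.toNat_of_nonneg (hm i), smul_smul, add_smul,
    ← natCast_zsmul (dw i) (j * n i), Nat.cast_mul]

lemma shift_nonneg_add {a b : Fin k → ℤ} {ja jb : ℕ}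
    (ha : ∀ i, 0 ≤ a i + ja * n i) (hb : ∀ i, 0 ≤ b i + jb * n i) (i : Fin k) :
    0 ≤ (a + b) i + ↑(ja + jb) * n i := by
  have := ha i
  have := hb i
  simp only [Pi.add_apply, Nat.cast_add, add_mul]
  linarith

end Exponents

section Localization

variable (R : Type*) [CommRing R] (n : Fin k → ℕ)

noncomputable abbrev prodXPow : MvPolynomial (Fin k) R := ∏ i, X i ^ n i

/-- `T^m`, written as `T^(m + J • n) / (T^n)^J` with `J = denomExponent m`. -/
noncomputable def laurentMonomial (m : Fin k → ℤ) : Localization.Away (prodXPow R n) :=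
  algebraMap _ _ (monomial (shiftExponent n m (denomExponent m)) (1 : R)) *
    IsLocalization.Away.invSelf (prodXPow R n) ^ denomExponent m

variable {R n}

lemma prodXPow_pow (c : ℕ) : prodXPow R n ^ c = monomial (shiftExponent n 0 c) 1 := by
  rw [prodXPow, ← Finset.prod_pow, monomial_eq, C_1, one_mul,
    Finsupp.prod_fintype _ _ fun _ => pow_zero _]
  refine Finset.prod_congr rfl fun i _ => ?_
  rw [shiftExponent_apply, Pi.zero_apply, zero_add, ← Nat.cast_mul, Int.toNat_natCast, ← pow_mul,
    mul_comm]

lemma monomial_shiftExponent_mul_prodXPow_pow {m : Fin k → ℤ} {j : ℕ}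
    (hm : ∀ i, 0 ≤ m i + j * n i) (c : ℕ) (r : R) :
    monomial (shiftExponent n m j) r * prodXPow R n ^ c =
      monomial (shiftExponent n m (j + c)) r := by
  rw [prodXPow_pow, monomial_mul, mul_one, shiftExponent_add hm fun i => by simp; positivity,
    add_zero]

lemma isRegular_prodXPow : IsRegular (prodXPow R n) :=
  IsRegular.prod fun _ _ => isRegular_X_pow _

lemma laurentMonomial_mul_pow {m : Fin k → ℤ} (hm : m ∈ awayExponents n) {j : ℕ}
    (hj : ∀ i, 0 ≤ m i + j * n i) :
    laurentMonomial R n m * algebraMap _ _ (prodXPow R n) ^ j =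
      algebraMap _ _ (monomial (shiftExponent n m j) (1 : R)) := by
  set J := denomExponent m
  calc laurentMonomial R n m * algebraMap _ _ (prodXPow R n) ^ j
      = algebraMap _ _ (monomial (shiftExponent n m J) (1 : R) * prodXPow R n ^ j) *
          IsLocalization.Away.invSelf (prodXPow R n) ^ J := by
        rw [laurentMonomial, map_mul, map_pow]; ring
    _ = algebraMap _ _ (monomial (shiftExponent n m j) (1 : R) * prodXPow R n ^ J) *
          IsLocalization.Away.invSelf (prodXPow R n) ^ J := by
        rw [monomial_shiftExponent_mul_prodXPow_pow
            (shift_nonneg_of_denomExponent_le hm le_rfl),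
          monomial_shiftExponent_mul_prodXPow_pow hj, add_comm]
    _ = algebraMap _ _ (monomial (shiftExponent n m j) (1 : R)) *
          (algebraMap _ _ (prodXPow R n) * IsLocalization.Away.invSelf (prodXPow R n)) ^ J := by
        rw [map_mul, map_pow, mul_pow, mul_assoc]
    _ = algebraMap _ _ (monomial (shiftExponent n m j) (1 : R)) := by
        rw [IsLocalization.Away.mul_invSelf, one_pow, mul_one]

lemma laurentMonomial_zero : laurentMonomial R n 0 = 1 := by
  have h := laurentMonomial_mul_pow (R := R) (zero_mem (awayExponents n)) (j := 0) (by simp)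
  have h0 : shiftExponent n 0 0 = 0 := by ext; simp [shiftExponent_apply]
  simpa [h0] using h

variable (R n)

noncomputable def laurentMonomialHom :
    Multiplicative (awayExponents n) →* Localization.Away (prodXPow R n) where
  toFun m := laurentMonomial R n (m.toAdd : Fin k → ℤ)
  map_one' := laurentMonomial_zero
  map_mul' a b := by
    set a' : Fin k → ℤ := ((Multiplicative.toAdd a : awayExponents n) : Fin k → ℤ)
    set b' : Fin k → ℤ := ((Multiplicative.toAdd b : awayExponents n) : Fin k → ℤ)
    have ha := shift_nonneg_of_denomExponent_le a.toAdd.2 (le_refl (denomExponent a'))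
    have hb := shift_nonneg_of_denomExponent_le b.toAdd.2 (le_refl (denomExponent b'))
    apply ((IsLocalization.Away.algebraMap_isUnit (prodXPow R n)).pow
      (denomExponent a' + denomExponent b')).mul_left_injective
    calc laurentMonomial R n (a' + b') *
          algebraMap _ _ (prodXPow R n) ^ (denomExponent a' + denomExponent b')
        = algebraMap _ _ (monomial (shiftExponent n a' (denomExponent a')) (1 : R) *
            monomial (shiftExponent n b' (denomExponent b')) 1) := by
          rw [laurentMonomial_mul_pow (add_mem a.toAdd.2 b.toAdd.2) (shift_nonneg_add ha hb),
            monomial_mul, one_mul, shiftExponent_add ha hb]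
      _ = laurentMonomial R n a' * algebraMap _ _ (prodXPow R n) ^ denomExponent a' *
            (laurentMonomial R n b' * algebraMap _ _ (prodXPow R n) ^ denomExponent b') := by
          rw [map_mul, laurentMonomial_mul_pow a.toAdd.2 ha, laurentMonomial_mul_pow b.toAdd.2 hb]
      _ = laurentMonomial R n a' * laurentMonomial R n b' *
            algebraMap _ _ (prodXPow R n) ^ (denomExponent a' + denomExponent b') := by
          ring

end Localization

section MonoidAlgebra

variable (R : Type*) [CommRing R] (n : Fin k → ℕ) (M : AddSubmonoid (Fin k → ℤ))

noncomputable def laurentHom (hM : M ≤ awayExponents n) :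
    AddMonoidAlgebra R M →+* Localization.Away (prodXPow R n) :=
  AddMonoidAlgebra.liftNCRingHom ((algebraMap (MvPolynomial (Fin k) R) _).comp C)
    ((laurentMonomialHom R n).comp (AddSubmonoid.inclusion hM).toMultiplicative)
    fun _ _ => Commute.all _ _

def commonDenom (p : AddMonoidAlgebra R M) : ℕ :=
  p.coeff.support.sup fun m => denomExponent (m : Fin k → ℤ)

noncomputable def clearedNumerator (p : AddMonoidAlgebra R M) : MvPolynomial (Fin k) R :=
  p.coeff.sum fun m r => monomial (shiftExponent n m (commonDenom R M p)) r

variable {R n M}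

lemma laurentHom_single (hM : M ≤ awayExponents n) (m : M) (r : R) :
    laurentHom R n M hM (AddMonoidAlgebra.single m r) =
      algebraMap (MvPolynomial (Fin k) R) _ (C r) * laurentMonomial R n m :=
  AddMonoidAlgebra.liftNCRingHom_single _ _ _ _ _

lemma laurentHom_single_mul_pow (hM : M ≤ awayExponents n) (m : M) (r : R) {j : ℕ}
    (hj : ∀ i, 0 ≤ (m : Fin k → ℤ) i + j * n i) :
    laurentHom R n M hM (AddMonoidAlgebra.single m r) *
        algebraMap (MvPolynomial (Fin k) R) _ (prodXPow R n) ^ j =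
      algebraMap _ _ (monomial (shiftExponent n m j) r) := by
  rw [laurentHom_single, mul_assoc, laurentMonomial_mul_pow (hM m.2) hj, ← map_mul,
    C_mul_monomial, mul_one]

lemma shift_nonneg_of_mem_support (hM : M ≤ awayExponents n) {p : AddMonoidAlgebra R M} {m : M}
    (hm : m ∈ p.coeff.support) (i : Fin k) : 0 ≤ (m : Fin k → ℤ) i + commonDenom R M p * n i :=
  shift_nonneg_of_denomExponent_le (hM m.2)
    (Finset.le_sup (f := fun m : M => denomExponent (m : Fin k → ℤ)) hm) i

lemma laurentHom_mul_pow_commonDenom (hM : M ≤ awayExponents n) (p : AddMonoidAlgebra R M) :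
    laurentHom R n M hM p *
        algebraMap (MvPolynomial (Fin k) R) _ (prodXPow R n) ^ commonDenom R M p =
      algebraMap _ _ (clearedNumerator R n M p) := by
  conv_lhs => arg 1; rw [← AddMonoidAlgebra.sum_coeff_single p]
  rw [clearedNumerator, map_finsuppSum, Finsupp.sum_mul, map_finsuppSum]
  exact Finset.sum_congr rfl fun m hm =>
    laurentHom_single_mul_pow hM m _ (shift_nonneg_of_mem_support hM hm)

lemma coeff_clearedNumerator (hM : M ≤ awayExponents n) {p : AddMonoidAlgebra R M} {m : M}
    (hm : m ∈ p.coeff.support) :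
    coeff (shiftExponent n m (commonDenom R M p)) (clearedNumerator R n M p) = p.coeff m := by
  classical
  rw [clearedNumerator, Finsupp.sum, coeff_sum, Finset.sum_eq_single m]
  · exact (coeff_monomial _ _ _).trans (if_pos rfl)
  · intro m' hm' hne
    refine (coeff_monomial _ _ _).trans (if_neg fun h => hne (Subtype.ext ?_))
    exact shiftExponent_injective (shift_nonneg_of_mem_support hM hm')
      (shift_nonneg_of_mem_support hM hm) h
  · exact fun h => (h hm).elim

theorem laurentHom_injective (hM : M ≤ awayExponents n) :
    Function.Injective (laurentHom R n M hM) := by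
  refine (injective_iff_map_eq_zero _).2 fun p hp => ?_
  have hnum : clearedNumerator R n M p = 0 := by
    refine IsLocalization.injectiveₛ (M := Submonoid.powers (prodXPow R n))
      (Localization.Away (prodXPow R n)) ?_ ?_
    · rintro _ ⟨c, rfl⟩
      exact isRegular_prodXPow.pow c
    · rw [← laurentHom_mul_pow_commonDenom hM, hp, zero_mul, map_zero]
  refine AddMonoidAlgebra.ext (Finsupp.ext fun m => ?_)
  rw [AddMonoidAlgebra.coeff_zero, Finsupp.coe_zero, Pi.zero_apply]
  by_contra hm
  exact hm (by rw [← coeff_clearedNumerator hM (Finsupp.mem_support_iff.2 hm), hnum, coeff_zero])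

end MonoidAlgebra

section Degree

variable {R : Type*} [CommRing R] {D : Type*} [AddCommGroup D] (dw : Fin k → D) (n : Fin k → ℕ)

lemma clearedNumerator_mem_weightedHomogeneousSubmodule (p : AddMonoidAlgebra R (MJ dw n)) :
    clearedNumerator R n (MJ dw n) p ∈
      weightedHomogeneousSubmodule R dw (commonDenom R (MJ dw n) p • ∑ i, n i • dw i) := by
  rw [clearedNumerator, Finsupp.sum]
  refine sum_mem fun m hm => isWeightedHomogeneous_monomial _ _ _ ?_
  rw [weight_shiftExponent dw (shift_nonneg_of_mem_support (MJ_le_awayExponents n dw) hm),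
    m.2.2, zero_add]

lemma sub_shift_mem_MJ {d : Fin k →₀ ℕ} {j : ℕ}
    (hd : Finsupp.weight dw d = j • ∑ i, n i • dw i) :
    (fun i => (d i : ℤ) - j * n i) ∈ MJ dw n := by
  refine ⟨fun i hi => by simp [hi], ?_⟩
  have h := weight_shiftExponent dw (n := n) (m := fun i => (d i : ℤ) - j * n i) (j := j)
    fun i => by simp
  rwa [shiftExponent_sub, hd, right_eq_add] at h

lemma algebraMap_monomial_mul_invSelf_pow_mem_range {d : Fin k →₀ ℕ} {j : ℕ}
    (hd : Finsupp.weight dw d = j • ∑ i, n i • dw i) (r : R) :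
    algebraMap _ _ (monomial d r) * IsLocalization.Away.invSelf (prodXPow R n) ^ j ∈
      (laurentHom R n (MJ dw n) (MJ_le_awayExponents n dw)).range := by
  refine ⟨AddMonoidAlgebra.single ⟨_, sub_shift_mem_MJ dw n hd⟩ r, ?_⟩
  have h := laurentHom_single_mul_pow (MJ_le_awayExponents n dw)
    ⟨_, sub_shift_mem_MJ dw n hd⟩ r (j := j) fun i => by simp
  rw [shiftExponent_sub] at h
  rw [← h, mul_assoc, ← mul_pow, IsLocalization.Away.mul_invSelf, one_pow, mul_one]

theorem range_laurentHom_MJ :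
    Set.range (laurentHom R n (MJ dw n) (MJ_le_awayExponents n dw)) =
      {x | ∃ (j : ℕ) (a : MvPolynomial (Fin k) R),
        a ∈ weightedHomogeneousSubmodule R dw (j • ∑ i, n i • dw i) ∧
        x * algebraMap (MvPolynomial (Fin k) R) _ ((∏ i, (X i) ^ n i) ^ j) =
          algebraMap (MvPolynomial (Fin k) R) _ a} := by
  rw [← RingHom.coe_range]
  ext x
  constructor
  · rintro ⟨p, rfl⟩
    refine ⟨commonDenom R _ p, clearedNumerator R n _ p,
      clearedNumerator_mem_weightedHomogeneousSubmodule dw n p, ?_⟩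
    rw [map_pow]
    exact laurentHom_mul_pow_commonDenom _ p
  · rintro ⟨j, a, ha, hx⟩
    have hx' : x = algebraMap _ _ a * IsLocalization.Away.invSelf (prodXPow R n) ^ j := by
      rw [← hx, mul_assoc, map_pow, ← mul_pow, IsLocalization.Away.mul_invSelf, one_pow, mul_one]
    rw [hx', a.as_sum, map_sum, Finset.sum_mul]
    exact sum_mem fun d hd =>
      algebraMap_monomial_mul_invSelf_pow_mem_range dw n (ha (mem_support_iff.1 hd)) _

end Degree

end LaurentMonomials

theorem stmt_15 {k : ℕ} {D R : Type*} [AddCommGroup D]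
    [CommRing R] (dw : Fin k → D) (n : Fin k → ℕ) :
    ∃ φ : AddMonoidAlgebra R (MJ dw n) →+*
        Localization.Away (∏ i, (X i : MvPolynomial (Fin k) R) ^ n i),
      Function.Injective φ ∧
      (∀ r : R, φ (AddMonoidAlgebra.single 0 r) =
        algebraMap (MvPolynomial (Fin k) R) _ (C r)) ∧
      Set.range φ = {x | ∃ (j : ℕ) (a : MvPolynomial (Fin k) R),
        a ∈ weightedHomogeneousSubmodule R dw (j • ∑ i, n i • dw i) ∧
        x * algebraMap (MvPolynomial (Fin k) R) _ ((∏ i, (X i) ^ n i) ^ j) =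
          algebraMap (MvPolynomial (Fin k) R) _ a} := by
  refine ⟨laurentHom R n (MJ dw n) (MJ_le_awayExponents n dw), laurentHom_injective _,
    fun r => ?_, range_laurentHom_MJ dw n⟩
  rw [laurentHom_single, ZeroMemClass.coe_zero, laurentMonomial_zero, mul_one]
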